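/- Every k-quasi-complete Hausdorff locally convex space over ℝ is Mackey-complete. -/

import Mathlib

/-! A Mackey-Cauchy sequence `x` is Cauchy, and the bounded set `B` controlling it lets us pick a
subsequence `x ∘ φ` whose increments still tend to `0` after multiplication by `2 ^ (k + 1)`.
Writing `z k = 2 ^ (k + 1) • (x (φ (k + 1)) - x (φ k))`, each `x (φ k) - x (φ 0)` is the
combination `∑ j < k, (1 / 2) ^ (j + 1) • z j` with total weight below `1`, so the subsequence lies
in a translate of the closed absolutely convex hull of the compact set `{0} ∪ range z`. That hull
is compact by k-quasi-completeness, and a Cauchy sequence with a subsequence in a compact set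
converges. -/

open Filter Topology Set Bornology Pointwise

/-- A sequence in a locally convex space is *Mackey-Cauchy* if there are a bounded
absolutely convex set `B` and a double sequence of nonnegative reals `c` tending to `0`
such that `x n - x m ∈ c n m • B` for all `n, m`. -/
def MackeyCauchy (E : Type*) [AddCommGroup E] [Module ℝ E] [TopologicalSpace E]
    (x : ℕ → E) : Prop :=
  ∃ (B : Set E) (c : ℕ → ℕ → ℝ),
    IsVonNBounded ℝ B ∧ Convex ℝ B ∧ Balanced ℝ B ∧
    (∀ n m, 0 ≤ c n m) ∧
    Tendsto (fun p : ℕ × ℕ => c p.1 p.2) atTop (𝓝 (0 : ℝ)) ∧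
    ∀ n m, x n - x m ∈ c n m • B

/-- A locally convex space is *Mackey-complete* if every Mackey-Cauchy sequence converges. -/
def MackeyComplete (E : Type*) [AddCommGroup E] [Module ℝ E] [TopologicalSpace E] : Prop :=
  ∀ x : ℕ → E, MackeyCauchy E x → ∃ l : E, Tendsto x atTop (𝓝 l)

/-- A locally convex space is *k-quasi-complete* if the closed absolutely convex hull of
every compact set is compact. -/
def KQuasiComplete (E : Type*) [AddCommGroup E] [Module ℝ E] [TopologicalSpace E] : Prop :=
  ∀ K : Set E, IsCompact K → IsCompact (closure (convexHull ℝ (balancedHull ℝ K)))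

theorem Convex.sum_smul_mem_of_zero_mem {𝕜 E ι : Type*} [Field 𝕜] [LinearOrder 𝕜]
    [IsStrictOrderedRing 𝕜] [AddCommGroup E] [Module 𝕜 E] {s : Set E} (hs : Convex 𝕜 s)
    (h₀ : (0 : E) ∈ s) {t : Finset ι} {w : ι → 𝕜} {z : ι → E} (hw₀ : ∀ i ∈ t, 0 ≤ w i)
    (hw₁ : ∑ i ∈ t, w i ≤ 1) (hz : ∀ i ∈ t, z i ∈ s) : ∑ i ∈ t, w i • z i ∈ s := by
  rcases (Finset.sum_nonneg hw₀).eq_or_lt with hW | hW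
  · rw [Finset.sum_eq_zero fun i hi => by
      rw [(Finset.sum_eq_zero_iff_of_nonneg hw₀).1 hW.symm i hi, zero_smul]]
    exact h₀
  · have hmass := hs.centerMass_mem hw₀ hW hz
    rw [← smul_inv_smul₀ hW.ne' (∑ i ∈ t, w i • z i)]
    exact hs.smul_mem_of_zero_mem h₀ hmass ⟨hW.le, hw₁⟩

theorem sub_mem_convexHull_insert_zero_range_two_pow_smul_sub {E : Type*} [AddCommGroup E]
    [Module ℝ E] (y : ℕ → E) (k : ℕ) :
    y k - y 0 ∈ convexHull ℝ (insert 0 (range fun j => (2 : ℝ) ^ (j + 1) • (y (j + 1) - y j))) := by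
  have htel : y k - y 0 =
      ∑ j ∈ Finset.range k, (1 / 2 : ℝ) ^ (j + 1) • ((2 : ℝ) ^ (j + 1) • (y (j + 1) - y j)) := by
    simp only [smul_smul, ← mul_pow, one_div, inv_mul_cancel₀ (two_ne_zero (α := ℝ)),
      one_pow, one_smul, Finset.sum_range_sub]
  rw [htel]
  refine (convex_convexHull ℝ _).sum_smul_mem_of_zero_mem (subset_convexHull ℝ _ (mem_insert _ _))
    (fun j _ => by positivity) ?_
    (fun j _ => subset_convexHull ℝ _ (mem_insert_of_mem _ (mem_range_self j)))
  simp only [pow_succ, ← Finset.sum_mul]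
  linarith [sum_geometric_two_le k]

theorem exists_strictMono_lt_of_tendsto_zero {c : ℕ → ℕ → ℝ}
    (hc : Tendsto (fun p : ℕ × ℕ => c p.1 p.2) atTop (𝓝 0)) {ε : ℕ → ℝ} (hε : ∀ k, 0 < ε k) :
    ∃ φ : ℕ → ℕ, StrictMono φ ∧ ∀ k, c (φ (k + 1)) (φ k) < ε k := by
  have hsmall : ∀ k, ∃ N, ∀ n ≥ N, ∀ m ≥ n, c m n < ε k := fun k => by
    obtain ⟨⟨N₁, N₂⟩, hN⟩ := eventually_atTop.1 (hc.eventually_lt_const (hε k))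
    exact ⟨max N₁ N₂, fun n hn m hm =>
      hN (m, n) ⟨le_trans (le_max_left _ _) (hn.trans hm), le_trans (le_max_right _ _) hn⟩⟩
  obtain ⟨φ, hφ, hφc⟩ := extraction_forall_of_eventually' hsmall
  exact ⟨φ, hφ, fun k => hφc k _ (hφ (Nat.lt_succ_self k)).le⟩

section MackeyCauchy

variable {E : Type*} [AddCommGroup E] [Module ℝ E]

theorem MackeyCauchy.tendsto_sub_nhds_zero [TopologicalSpace E] {x : ℕ → E}
    (hx : MackeyCauchy E x) : Tendsto (fun p : ℕ × ℕ => x p.1 - x p.2) atTop (𝓝 0) := by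
  obtain ⟨B, c, hB, -, -, -, hc, hxc⟩ := hx
  choose b hbB hb using hxc
  exact (hB.smul_tendsto_zero (Eventually.of_forall fun p : ℕ × ℕ => hbB p.1 p.2) hc).congr
    fun p => hb p.1 p.2

theorem MackeyCauchy.cauchySeq [UniformSpace E] [IsUniformAddGroup E] {x : ℕ → E}
    (hx : MackeyCauchy E x) : CauchySeq x :=
  (IsUniformAddGroup.cauchy_map_iff_tendsto _ _).2
    ⟨inferInstance, by simpa only [prod_atTop_atTop_eq] using hx.tendsto_sub_nhds_zero⟩

theorem MackeyCauchy.exists_strictMono_tendsto_two_pow_smul_sub [TopologicalSpace E]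
    {x : ℕ → E} (hx : MackeyCauchy E x) : ∃ φ : ℕ → ℕ, StrictMono φ ∧
      Tendsto (fun k => (2 : ℝ) ^ (k + 1) • (x (φ (k + 1)) - x (φ k))) atTop (𝓝 0) := by
  obtain ⟨B, c, hB, -, -, hc₀, hc, hxc⟩ := hx
  obtain ⟨φ, hφ, hφc⟩ := exists_strictMono_lt_of_tendsto_zero hc
    (ε := fun k => (1 / 4 : ℝ) ^ k) fun k => by positivity
  choose b hbB hb using hxc
  have hbound : ∀ k, (2 : ℝ) ^ (k + 1) * c (φ (k + 1)) (φ k) ≤ 2 * (1 / 2) ^ k := fun k =>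
    calc (2 : ℝ) ^ (k + 1) * c (φ (k + 1)) (φ k) ≤ 2 ^ (k + 1) * (1 / 4) ^ k := by
          gcongr; exact (hφc k).le
      _ = 2 * (1 / 2) ^ k := by
          rw [pow_succ, mul_comm _ (2 : ℝ), mul_assoc, ← mul_pow]; norm_num
  have hscale : Tendsto (fun k => (2 : ℝ) ^ (k + 1) * c (φ (k + 1)) (φ k)) atTop (𝓝 0) := by
    refine squeeze_zero (fun k => mul_nonneg (by positivity) (hc₀ _ _)) hbound ?_
    simpa using (tendsto_pow_atTop_nhds_zero_of_lt_one (r := (1 / 2 : ℝ))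
      (by norm_num) (by norm_num)).const_mul 2
  refine ⟨φ, hφ, (hB.smul_tendsto_zero (Eventually.of_forall fun k =>
    hbB (φ (k + 1)) (φ k)) hscale).congr fun k => ?_⟩
  rw [Pi.smul_apply', ← hb, smul_smul]

end MackeyCauchy

theorem mackeyComplete_of_kQuasiComplete_general
    (E : Type*) [AddCommGroup E] [Module ℝ E] [TopologicalSpace E] [IsTopologicalAddGroup E]
    (h : KQuasiComplete E) :
    MackeyComplete E := by
  intro x hx
  let _ : UniformSpace E := IsTopologicalAddGroup.rightUniformSpace E
  have _ : IsUniformAddGroup E := isUniformAddGroup_of_addCommGroup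
  obtain ⟨φ, hφ, hz⟩ := hx.exists_strictMono_tendsto_two_pow_smul_sub
  have hC := h _ hz.isCompact_insert_range
  have hmem : ∀ k, x (φ k) ∈ (x (φ 0) + ·) '' closure (convexHull ℝ (balancedHull ℝ
      (insert 0 (range fun j => (2 : ℝ) ^ (j + 1) • (x (φ (j + 1)) - x (φ j)))))) :=
    fun k => ⟨x (φ k) - x (φ 0), subset_closure <| convexHull_mono (subset_balancedHull ℝ)
      (sub_mem_convexHull_insert_zero_range_two_pow_smul_sub (x ∘ φ) k), add_sub_cancel _ _⟩
  obtain ⟨l, -, hl⟩ := cauchySeq_tendsto_of_isComplete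
    (hC.image (continuous_const_add _)).isComplete hmem
    (hx.cauchySeq.comp_tendsto hφ.tendsto_atTop)
  exact ⟨l, tendsto_nhds_of_cauchySeq_of_subseq hx.cauchySeq hφ.tendsto_atTop hl⟩

/-- Every k-quasi-complete Hausdorff locally convex space over `ℝ` is
Mackey-complete. -/
theorem mackeyComplete_of_kQuasiComplete
    (E : Type*) [AddCommGroup E] [Module ℝ E] [TopologicalSpace E] [IsTopologicalAddGroup E]
    [ContinuousSMul ℝ E] [LocallyConvexSpace ℝ E] [T2Space E]
    (h : KQuasiComplete E) :
    MackeyComplete E :=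
  mackeyComplete_of_kQuasiComplete_general E h
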